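/- arXiv:1703.01573 — 4 statements merged into one kernel-verified Lean document; each statement's English description precedes it below -/
import Mathlib

section
/- For every c ≥ 1 and k ≥ 1 with 2^(1/k) - 1 < 1/(2c), for all sufficiently large n, ⌊2^((n+1)/k)⌋ ≤ (1/c) · Σ_{i=0}^{n} ⌊2^(i/k)⌋. -/
/-!
With `q = 2 ^ (1 / k)` the blocks are `⌊q ^ i⌋`. Dropping the floors costs at most one per block,
so the first `m` blocks sum to at least `(q ^ m - 1) / (q - 1) - m ≥ 2c (q ^ m - 1) - m`, using
`q - 1 ≤ 1 / (2c)`. This exceeds `c q ^ m ≥ c ⌊q ^ m⌋` as soon as `q ^ m ≥ m / c + 2`, which holds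
eventually because `q > 1`.
-/

open Filter Finset Asymptotics

lemma eventually_mul_add_le_pow (a b : ℝ) {q : ℝ} (hq : 1 < q) :
    ∀ᶠ n : ℕ in atTop, a * n + b ≤ q ^ n := by
  have hlin : (fun n : ℕ ↦ a * n + b) =o[atTop] fun n ↦ q ^ n :=
    ((isLittleO_coe_const_pow_of_one_lt hq).const_mul_left a).add <|
      isLittleO_const_left.mpr <| Or.inr <| by
        simpa [Function.comp_def, abs_of_pos (zero_lt_one.trans hq)]
          using tendsto_pow_atTop_atTop_of_one_lt hq
  filter_upwards [hlin.bound one_pos] with n hn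
  rw [one_mul, Real.norm_of_nonneg (pow_nonneg (zero_le_one.trans hq.le) n)] at hn
  exact (Real.le_norm_self _).trans hn

lemma geom_sum_sub_card_le_sum_floor_pow {q : ℝ} (hq : q ≠ 1) (m : ℕ) :
    (q ^ m - 1) / (q - 1) - m ≤ ∑ i ∈ range m, (⌊q ^ i⌋ : ℝ) := by
  calc (q ^ m - 1) / (q - 1) - m = ∑ i ∈ range m, (q ^ i - 1) := by
        rw [sum_sub_distrib, geom_sum_eq hq]
        simp
    _ ≤ _ := sum_le_sum fun i _ ↦ (Int.sub_one_lt_floor _).le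

lemma mul_floor_pow_le_sum_floor_pow {q c : ℝ} (hq : 1 < q) (hc : 0 < c)
    (hqc : 2 * c * (q - 1) ≤ 1) {m : ℕ} (hm : m + 2 * c ≤ c * q ^ m) :
    c * ⌊q ^ m⌋ ≤ ∑ i ∈ range m, (⌊q ^ i⌋ : ℝ) := by
  have hq1 : 0 < q - 1 := sub_pos.mpr hq
  have hqm : 0 ≤ q ^ m - 1 := sub_nonneg.mpr (one_le_pow₀ hq.le)
  have hgeom : 2 * c * (q ^ m - 1) ≤ (q ^ m - 1) / (q - 1) := by
    rw [le_div_iff₀ hq1]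
    nlinarith
  calc c * ⌊q ^ m⌋ ≤ c * q ^ m := mul_le_mul_of_nonneg_left (Int.floor_le _) hc.le
    _ ≤ 2 * c * (q ^ m - 1) - m := by linarith
    _ ≤ (q ^ m - 1) / (q - 1) - m := by linarith
    _ ≤ _ := geom_sum_sub_card_le_sum_floor_pow hq.ne' m

lemma eventually_mul_floor_pow_le_sum_floor_pow {q c : ℝ} (hq : 1 < q) (hc : 0 < c)
    (hqc : 2 * c * (q - 1) ≤ 1) :
    ∀ᶠ m : ℕ in atTop, c * ⌊q ^ m⌋ ≤ ∑ i ∈ range m, (⌊q ^ i⌋ : ℝ) := by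
  filter_upwards [eventually_mul_add_le_pow c⁻¹ 2 hq] with m hm
  refine mul_floor_pow_le_sum_floor_pow hq hc hqc ?_
  calc (m : ℝ) + 2 * c = c * (c⁻¹ * m + 2) := by field_simp
    _ ≤ c * q ^ m := mul_le_mul_of_nonneg_left hm hc.le

lemma Real.rpow_natCast_div (x : ℝ) (hx : 0 ≤ x) (i k : ℕ) :
    x ^ ((i : ℝ) / k) = (x ^ ((1 : ℝ) / k)) ^ i := by
  rw [← Real.rpow_mul_natCast hx, one_div_mul_eq_div]

theorem monin_floor_block_bound (c k : ℕ) (hc : 1 ≤ c) (hk : 1 ≤ k)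
    (h : (2 : ℝ) ^ ((1 : ℝ) / k) - 1 < 1 / (2 * c)) :
    ∃ N : ℕ, ∀ n ≥ N,
      (⌊(2 : ℝ) ^ (((n : ℝ) + 1) / k)⌋ : ℝ) ≤
        (1 / c) * ∑ i ∈ Finset.range (n + 1), (⌊(2 : ℝ) ^ ((i : ℝ) / k)⌋ : ℝ) := by
  set q : ℝ := (2 : ℝ) ^ ((1 : ℝ) / k)
  have hc0 : (0 : ℝ) < c := by exact_mod_cast hc
  have hq : 1 < q := Real.one_lt_rpow one_lt_two (one_div_pos.mpr (by exact_mod_cast hk))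
  have hqc : 2 * c * (q - 1) ≤ 1 := by
    rw [lt_div_iff₀ (by positivity)] at h
    linarith
  obtain ⟨N, hN⟩ := eventually_atTop.mp <|
    (tendsto_add_atTop_nat 1).eventually (eventually_mul_floor_pow_le_sum_floor_pow hq hc0 hqc)
  refine ⟨N, fun n hn ↦ ?_⟩
  have hblock : ((n : ℝ) + 1) / k = ((n + 1 : ℕ) : ℝ) / k := by push_cast; rfl
  simp only [hblock, Real.rpow_natCast_div 2 zero_le_two]
  rw [one_div (c : ℝ), le_inv_mul_iff₀ hc0]
  exact hN n hn
end

section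
/- Let p be a prime and L a finite p-group. Then |L| ≤ p^r if and only if there exist elements x₁,...,x_r ∈ L such that every y ∈ L can be written as y = x₁^{a₁} · x₂^{a₂} · ... · x_r^{a_r} with 0 ≤ a_i < p for each i. -/
/-!
Since `L` is a `p`-group, a nontrivial `L` has a central element `z` of order `p`. By induction,
`L ⧸ ⟨z⟩` has `r - 1` elements whose restricted power products exhaust it; lifting them and
appending `z` does the same for `L`, since every element of `⟨z⟩` is `z ^ c` with `c < p`.
Conversely, the map `(a₁, …, a_r) ↦ x₁ ^ a₁ ⋯ x_r ^ a_r` from `(Fin p)ʳ` onto `L` bounds `|L|`.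
-/

open Subgroup

def PowerProductsCover {M : Type*} [Monoid M] {r : ℕ} (p : ℕ) (x : Fin r → M) : Prop :=
  ∀ y : M, ∃ a : Fin r → ℕ, (∀ i, a i < p) ∧ y = (List.ofFn fun i => x i ^ a i).prod

section Monoid

variable {M : Type*} [Monoid M] {p r : ℕ}

theorem PowerProductsCover.card_le [Finite M] {x : Fin r → M} (hx : PowerProductsCover p x) :
    Nat.card M ≤ p ^ r := by
  have hsurj : Function.Surjective
      fun a : Fin r → Fin p => (List.ofFn fun i => x i ^ (a i : ℕ)).prod := fun y => by
    obtain ⟨a, ha, rfl⟩ := hx y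
    exact ⟨fun i => ⟨a i, ha i⟩, rfl⟩
  simpa using Nat.card_le_card_of_surjective _ hsurj

theorem powerProductsCover_of_subsingleton [Subsingleton M] (hp : 0 < p) (x : Fin r → M) :
    PowerProductsCover p x :=
  fun _ => ⟨0, fun _ => hp, Subsingleton.elim _ _⟩

end Monoid

section Group

variable {G : Type*} [Group G] {p : ℕ}

theorem Subgroup.normal_of_le_center {H : Subgroup G} (h : H ≤ center G) : H.Normal :=
  ⟨fun n hn g => by rwa [mem_center_iff.mp (h hn) g, mul_inv_cancel_right]⟩

theorem powerProductsCover_zpowers {z : G} (hz : z ^ p = 1) (hp : 0 < p) :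
    PowerProductsCover p fun _ : Fin 1 => (⟨z, mem_zpowers z⟩ : zpowers z) := by
  rintro ⟨y, hy⟩
  obtain ⟨n, rfl⟩ := (Submonoid.mem_powers_iff _ _).mp <|
    ((isOfFinOrder_iff_pow_eq_one.mpr ⟨p, hp, hz⟩).mem_powers_iff_mem_zpowers).mpr hy
  refine ⟨fun _ => n % p, fun _ => Nat.mod_lt n hp, ?_⟩
  ext
  simp [pow_eq_pow_mod n hz]

theorem PowerProductsCover.append_out {r s : ℕ} {N : Subgroup G} [N.Normal] {x : Fin r → G ⧸ N}
    {w : Fin s → N} (hx : PowerProductsCover p x) (hw : PowerProductsCover p w) :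
    PowerProductsCover p (Fin.append (fun i => (x i).out) fun j => (w j : G)) := by
  intro y
  obtain ⟨a, ha, hya⟩ := hx y
  set u := (List.ofFn fun i => (x i).out ^ a i).prod
  have hu : (u : G ⧸ N) = y := by
    rw [hya, ← QuotientGroup.mk'_apply, map_list_prod, List.map_ofFn]
    simp [Function.comp_def]
  obtain ⟨b, hb, hyb⟩ := hw ⟨u⁻¹ * y, QuotientGroup.eq.mp hu⟩
  refine ⟨Fin.append a b, Fin.addCases (by simpa using ha) (by simpa using hb), ?_⟩
  have hsplit : (fun i => Fin.append (fun i => (x i).out) (fun j => (w j : G)) i ^ Fin.append a b i)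
      = Fin.append (fun i => (x i).out ^ a i) fun j => (w j : G) ^ b j := by
    funext i
    refine Fin.addCases (fun i => ?_) (fun j => ?_) i <;> simp
  have hyb' : u⁻¹ * y = (List.ofFn fun j => (w j : G) ^ b j).prod := by
    simpa [Subgroup.val_list_prod, List.map_ofFn, Function.comp_def] using congrArg Subtype.val hyb
  rw [hsplit, List.ofFn_fin_append, List.prod_append, ← hyb', mul_inv_cancel_left]

end Group

theorem IsPGroup.exists_mem_center_orderOf_eq {p : ℕ} [Fact p.Prime] {G : Type*} [Group G]
    [Finite G] [Nontrivial G] (hG : IsPGroup p G) : ∃ z ∈ center G, orderOf z = p := by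
  have := hG.center_nontrivial
  have hdvd : p ∣ Nat.card (center G) :=
    (hG.to_subgroup _).card_eq_or_dvd.resolve_left Finite.one_lt_card.ne'
  obtain ⟨z, hz⟩ := exists_prime_orderOf_dvd_card' p hdvd
  exact ⟨z, z.2, by rwa [Subgroup.orderOf_coe]⟩

theorem IsPGroup.exists_powerProductsCover {p : ℕ} (hp : p.Prime) {G : Type*} [Group G] [Finite G]
    (hG : IsPGroup p G) {r : ℕ} (hcard : Nat.card G ≤ p ^ r) :
    ∃ x : Fin r → G, PowerProductsCover p x := by
  have := Fact.mk hp
  induction r generalizing G with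
  | zero =>
    have := Finite.card_le_one_iff_subsingleton.mp (by simpa using hcard)
    exact ⟨Fin.elim0, powerProductsCover_of_subsingleton hp.pos _⟩
  | succ r ih =>
    rcases subsingleton_or_nontrivial G with _ | _
    · exact ⟨1, powerProductsCover_of_subsingleton hp.pos _⟩
    obtain ⟨z, hzc, hzp⟩ := hG.exists_mem_center_orderOf_eq
    have := normal_of_le_center (zpowers_le.mpr hzc)
    have hquot : Nat.card (G ⧸ zpowers z) ≤ p ^ r := by
      have := card_eq_card_quotient_mul_card_subgroup (zpowers z)
      rw [Nat.card_zpowers, hzp] at this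
      exact Nat.le_of_mul_le_mul_right (by rwa [← this, ← pow_succ]) hp.pos
    obtain ⟨x, hx⟩ := ih (hG.to_quotient _) hquot
    exact ⟨_, hx.append_out (powerProductsCover_zpowers (hzp ▸ pow_orderOf_eq_one z) hp.pos)⟩

theorem pGroup_card_le_iff_generators (p : ℕ) (hp : p.Prime)
    (L : Type*) [Group L] [Fintype L] (hL : IsPGroup p L) (r : ℕ) :
    Fintype.card L ≤ p ^ r ↔
      ∃ x : Fin r → L, ∀ y : L, ∃ a : Fin r → ℕ,
        (∀ i, a i < p) ∧ y = (List.ofFn fun i => x i ^ a i).prod := by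
  rw [← Nat.card_eq_fintype_card]
  exact ⟨hL.exists_powerProductsCover hp, fun ⟨_, hx⟩ => PowerProductsCover.card_le hx⟩
end

section
/- Every finitely generated profinite group is Hopfian: if G is a profinite group that is topologically finitely generated, then every continuous surjective group homomorphism α : G → G is injective (hence an isomorphism of topological groups). -/
/-!
A finitely generated group has only finitely many subgroups of index `n`: such a subgroup is the
stabiliser of a point for an action on `Fin n`, and the action is determined by the images of the
generators. An open subgroup is determined by its trace on a dense subgroup, so `G` has only
finitely many open subgroups of index at most `n`. Pulling back along the surjection `α` permutes
this finite set injectively, hence surjectively, so `ker α` lies in every open subgroup; in a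
profinite group the open subgroups intersect trivially.
-/

open Function

namespace MonoidHom

instance finite_of_fg {G F : Type*} [Group G] [Group.FG G] [Monoid F] [Finite F] :
    Finite (G →* F) := by
  obtain ⟨S, hS⟩ := Group.fg_def.mp ‹_›
  refine Finite.of_injective (fun φ : G →* F => fun s : S => φ s) fun φ ψ hφψ => ?_
  exact eq_of_eqOn_dense hS fun s hs => congrFun hφψ ⟨s, hs⟩

theorem ker_le_of_mapsTo_comap {G : Type*} [Group G] {f : G →* G} (hf : Surjective f)
    {𝒮 : Set (Subgroup G)} (h𝒮 : 𝒮.Finite) (hmaps : Set.MapsTo (Subgroup.comap f) 𝒮 𝒮)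
    {K : Subgroup G} (hK : K ∈ 𝒮) : f.ker ≤ K := by
  have hbij := (h𝒮.injOn_iff_bijOn_of_mapsTo hmaps).mp (Subgroup.comap_injective hf).injOn
  obtain ⟨H, -, rfl⟩ := hbij.surjOn hK
  exact f.ker_le_comap H

end MonoidHom

namespace Subgroup

variable {G : Type*} [Group G]

theorem finite_setOf_index_eq [Group.FG G] {n : ℕ} (hn : n ≠ 0) :
    {H : Subgroup G | H.index = n}.Finite := by
  let 𝒮 := {H : Subgroup G | H.index = n}
  have e : ∀ H : 𝒮, G ⧸ (H : Subgroup G) ≃ Fin n := fun H =>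
    have hcard : Nat.card (G ⧸ (H : Subgroup G)) = n := H.2
    have : Finite (G ⧸ (H : Subgroup G)) := Nat.finite_of_card_ne_zero (hcard ▸ hn)
    Finite.equivFinOfCardEq hcard
  let action : ∀ H : 𝒮, G →* Equiv.Perm (Fin n) := fun H =>
    (e H).permCongrHom.toMonoidHom.comp (MulAction.toPermHom G (G ⧸ (H : Subgroup G)))
  have mem_iff : ∀ (H : 𝒮) (g : G),
      g ∈ (H : Subgroup G) ↔ action H g (e H (1 : G)) = e H (1 : G) := by
    intro H g
    have : action H g (e H (1 : G)) = e H (g : G ⧸ (H : Subgroup G)) := by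
      simp [action, Equiv.permCongrHom]
    rw [this, (e H).apply_eq_iff_eq, QuotientGroup.eq, mul_one, inv_mem_iff]
  refine Set.finite_coe_iff.mp <| Finite.of_injective (fun H => (action H, e H (1 : G)))
    fun H K hHK => Subtype.ext <| Subgroup.ext fun g => ?_
  simp only [Prod.mk.injEq] at hHK
  rw [mem_iff, mem_iff, hHK.1, hHK.2]

theorem finite_setOf_index_le [Group.FG G] (n : ℕ) :
    {H : Subgroup G | H.index ≠ 0 ∧ H.index ≤ n}.Finite := by
  refine ((Set.finite_Icc 1 n).biUnion fun k hk => finite_setOf_index_eq (G := G)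
    (Nat.one_le_iff_ne_zero.mp hk.1)).subset fun H ⟨hH0, hHn⟩ => ?_
  exact Set.mem_biUnion ⟨Nat.one_le_iff_ne_zero.mpr hH0, hHn⟩ rfl

theorem relIndex_le_index {H : Subgroup G} (hH : H.index ≠ 0) (K : Subgroup G) :
    H.relIndex K ≤ H.index := by
  rw [← relIndex_top_right] at hH ⊢
  exact relIndex_le_of_le_right le_top hH

variable [TopologicalSpace G]

section SeparatelyContinuousMul

variable [SeparatelyContinuousMul G]

theorem le_of_inf_le_of_dense {D H K : Subgroup G} (hD : Dense (D : Set G))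
    (hH : IsOpen (H : Set G)) (hK : IsOpen (K : Set G)) (h : H ⊓ D ≤ K) : H ≤ K :=
  calc (H : Set G) ⊆ _root_.closure (H ∩ D) := hD.open_subset_closure_inter hH
    _ ⊆ _root_.closure K := _root_.closure_mono h
    _ = K := (K.isClosed_of_isOpen hK).closure_eq

theorem injOn_subgroupOf_of_dense {D : Subgroup G} (hD : Dense (D : Set G)) :
    Set.InjOn (·.subgroupOf D) {H : Subgroup G | IsOpen (H : Set G)} := by
  intro H hH K hK hHK
  rw [subgroupOf_inj] at hHK
  exact le_antisymm (le_of_inf_le_of_dense hD hH hK (hHK.le.trans inf_le_left))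
    (le_of_inf_le_of_dense hD hK hH (hHK.ge.trans inf_le_left))

theorem finite_setOf_isOpen_index_le {D : Subgroup G} [Group.FG D] (hD : Dense (D : Set G))
    (n : ℕ) : {H : Subgroup G | IsOpen (H : Set G) ∧ H.index ≠ 0 ∧ H.index ≤ n}.Finite := by
  refine Set.Finite.of_injOn ?_ ((injOn_subgroupOf_of_dense hD).mono fun H hH => hH.1)
    (finite_setOf_index_le n)
  rintro H ⟨-, hH0, hHn⟩
  refine ⟨fun h => hH0 ?_, (relIndex_le_index hH0 D).trans hHn⟩
  rw [← relIndex_top_right]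
  exact relIndex_eq_zero_of_le_right le_top h

end SeparatelyContinuousMul

theorem eq_bot_of_forall_isOpen_le [IsTopologicalGroup G] [CompactSpace G]
    [TotallyDisconnectedSpace G]
    {N : Subgroup G} (hN : ∀ H : Subgroup G, IsOpen (H : Set G) → N ≤ H) : N = ⊥ := by
  refine (eq_bot_iff_forall N).mpr fun g hg => by_contra fun hg1 => ?_
  obtain ⟨H, hH⟩ := ProfiniteGrp.exist_openNormalSubgroup_sub_open_nhds_of_one
    (isOpen_compl_singleton (x := g)) (Ne.symm hg1)
  exact hH (hN H.toSubgroup H.isOpen hg) rfl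

end Subgroup

theorem profinite_fg_hopfian_general (G : Type*) [Group G] [TopologicalSpace G]
    [IsTopologicalGroup G] [CompactSpace G] [TotallyDisconnectedSpace G]
    (hfg : ∃ S : Finset G, closure ((Subgroup.closure (S : Set G) : Subgroup G) : Set G) = Set.univ)
    (α : G →* G) (hcont : Continuous α) (hsurj : Function.Surjective α) :
    Function.Injective α := by
  obtain ⟨S, hS⟩ := hfg
  have : Group.FG (Subgroup.closure (S : Set G)) := (Group.fg_iff_subgroup_fg _).mpr ⟨S, rfl⟩
  rw [← MonoidHom.ker_eq_bot_iff]
  refine Subgroup.eq_bot_of_forall_isOpen_le fun K hK => ?_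
  have : Finite (G ⧸ K) := K.quotient_finite_of_isOpen hK
  have hfin := Subgroup.finite_setOf_isOpen_index_le (dense_iff_closure_eq.mpr hS) K.index
  refine α.ker_le_of_mapsTo_comap hsurj hfin ?_ ⟨hK, K.index_ne_zero_of_finite, le_rfl⟩
  rintro H ⟨hH, hH0, hHn⟩
  refine ⟨hH.preimage hcont, ?_⟩
  rw [Subgroup.index_comap_of_surjective H hsurj]
  exact ⟨hH0, hHn⟩

theorem profinite_fg_hopfian (G : Type*) [Group G] [TopologicalSpace G]
    [IsTopologicalGroup G] [CompactSpace G] [TotallyDisconnectedSpace G] [T2Space G]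
    (hfg : ∃ S : Finset G, closure ((Subgroup.closure (S : Set G) : Subgroup G) : Set G) = Set.univ)
    (α : G →* G) (hcont : Continuous α) (hsurj : Function.Surjective α) :
    Function.Injective α :=
  profinite_fg_hopfian_general G hfg α hcont hsurj
end

section
/- A small residually finite group is Hopfian: if G is a group with only finitely many subgroups of each finite index, and G is residually finite, then every surjective endomorphism α : G → G is an isomorphism. -/
/-!
Pulling back along a surjective endomorphism `α` preserves the index and is injective on
subgroups, so it permutes the finitely many subgroups of a given index. Hence every such
subgroup is a preimage under `α` and contains `ker α`; by residual finiteness `ker α` is trivial.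
-/

open Function Set

namespace Subgroup

variable {G : Type*} [Group G] {α : G →* G}

theorem exists_comap_eq_of_surjective (hα : Surjective α) {H : Subgroup G}
    (hfin : {K : Subgroup G | K.index = H.index}.Finite) : ∃ K : Subgroup G, K.comap α = H := by
  have hmaps : MapsTo (comap α) {K | K.index = H.index} {K | K.index = H.index} :=
    fun K hK => (index_comap_of_surjective K hα).trans hK
  have hinj : InjOn (comap α) {K | K.index = H.index} := (comap_injective hα).injOn
  obtain ⟨K, -, hK⟩ := ((hfin.injOn_iff_bijOn_of_mapsTo hmaps).mp hinj).surjOn (rfl : H.index = _)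
  exact ⟨K, hK⟩

theorem ker_le_of_surjective_of_finite (hα : Surjective α) {H : Subgroup G}
    (hfin : {K : Subgroup G | K.index = H.index}.Finite) : α.ker ≤ H := by
  obtain ⟨K, rfl⟩ := exists_comap_eq_of_surjective hα hfin
  exact α.ker_le_comap K

end Subgroup

theorem small_residually_finite_hopfian (G : Type*) [Group G]
    (hsmall : ∀ n : ℕ, {H : Subgroup G | H.index = n}.Finite)
    (hrf : ∀ g : G, g ≠ 1 → ∃ H : Subgroup G, H.index ≠ 0 ∧ g ∉ H)
    (α : G →* G) (hsurj : Function.Surjective α) :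
    Function.Bijective α := by
  refine ⟨?_, hsurj⟩
  rw [← MonoidHom.ker_eq_bot_iff, eq_bot_iff]
  intro g hg
  rw [Subgroup.mem_bot]
  by_contra hg1
  obtain ⟨H, -, hgH⟩ := hrf g hg1
  exact hgH (Subgroup.ker_le_of_surjective_of_finite hsurj (hsmall _) hg)
end
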